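/- arXiv:1401.0189 — 2 statements merged into one kernel-verified Lean document; each statement's English description precedes it below -/
import Mathlib

section
/- Let ε ∈ (0,1/2) and let D = {x_{i_1 j_1}, …, x_{i_t j_t}} be an admissible set of variables. Then there is at most one univariate polynomial a over F_n of degree < εn satisfying a(i_k) = j_k for all 1 ≤ k ≤ t. If such a polynomial a exists, the partial derivative of NW_{n,ε} with respect to the variables of D equals the multilinear monomial Π_{i ∈ F_n∖{i_1,…,i_t}} x_{i,a(i)}; if no such polynomial exists, this partial derivative is zero. -/
/-!
A product of distinct variables, differentiated with respect to a set `D` of variables, is the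
product of the remaining variables if `D` is among them and `0` otherwise. The monomial of `NW`
indexed by `a` is the product of the variables on the graph of `a`, so the only monomials that
survive are those of the polynomials `a` interpolating the points of `D`. Since `a` has degree
`< εn ≤ t` and the `t` rows of `D` are distinct, there is at most one such `a`.
-/

open MvPolynomial

noncomputable section

/-- Evaluation at `i` of the univariate polynomial with coefficient vector `a`
(vectors `a : Fin d → Fn` encode exactly the univariate polynomials of degree `< d`). -/
def polyEval {Fn : Type*} [CommRing Fn] {d : ℕ} (a : Fin d → Fn) (i : Fn) : Fn :=
  ∑ k : Fin d, a k * i ^ (k : ℕ)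

/-- The Nisan–Wigderson polynomial over the coefficient field `K`, summing over all
univariate polynomials over `Fn` of degree `< d` (encoded by coefficient vectors). -/
def NW (Fn : Type*) [CommRing Fn] [Fintype Fn] (K : Type*) [CommSemiring K] (d : ℕ) :
    MvPolynomial (Fn × Fn) K :=
  ∑ a : Fin d → Fn, ∏ i : Fn, X (i, polyEval a i)

/-- Iterated partial derivative with respect to a finite set of variables. -/
def pderivFinset {σ : Type*} {K : Type*} [CommSemiring K] (D : Finset σ)
    (f : MvPolynomial σ K) : MvPolynomial σ K :=
  D.toList.foldr (fun v g => pderiv v g) f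

theorem polyEval_eq_eval_ofFn {F : Type*} [CommRing F] [DecidableEq F] {d : ℕ}
    (a : Fin d → F) (i : F) : polyEval a i = (Polynomial.ofFn d a).eval i := by
  simp [polyEval, Polynomial.ofFn_eq_sum_monomial, Polynomial.eval_finsetSum]

theorem eq_of_polyEval_eq_of_le {F : Type*} [CommRing F] [IsDomain F] {d t : ℕ} (hdt : d ≤ t)
    {row : Fin t → F} (hrow : Function.Injective row) {a b : Fin d → F}
    (hab : ∀ k, polyEval a (row k) = polyEval b (row k)) : a = b := by
  classical
  have hdeg (c : Fin d → F) :
      (Polynomial.ofFn d c).degree < (Finset.univ : Finset (Fin t)).card :=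
    (Polynomial.ofFn_degree_lt c).trans_le (by simpa using hdt)
  refine Polynomial.injective_ofFn d <|
    Polynomial.eq_of_degrees_lt_of_eval_index_eq _ hrow.injOn (hdeg a) (hdeg b) fun k _ => ?_
  simpa only [polyEval_eq_eval_ofFn] using hab k

section pderivFinset

variable {σ R : Type*} [CommSemiring R]

theorem pderivFinset_sum {ι : Type*} (D : Finset σ) (A : Finset ι)
    (f : ι → MvPolynomial σ R) :
    pderivFinset D (∑ a ∈ A, f a) = ∑ a ∈ A, pderivFinset D (f a) := by
  unfold pderivFinset
  induction D.toList with
  | nil => rfl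
  | cons v L ih => simp only [List.foldr_cons, ih, map_sum]

variable [DecidableEq σ]

theorem pderiv_prod_X (v : σ) (S : Finset σ) :
    pderiv v (∏ u ∈ S, X u : MvPolynomial σ R) =
      if v ∈ S then ∏ u ∈ S.erase v, X u else 0 := by
  have prod_X_eq (T : Finset σ) :
      (∏ u ∈ T, X u : MvPolynomial σ R) = monomial (∑ u ∈ T, Finsupp.single u 1) 1 := by
    rw [monomial_sum_one]; rfl
  rw [prod_X_eq, pderiv_monomial]
  by_cases hv : v ∈ S
  · rw [← Finset.add_sum_erase _ _ hv, add_tsub_cancel_left, if_pos hv, prod_X_eq]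
    simp [Finsupp.single_apply]
  · simp [Finsupp.finsetSum_apply, Finsupp.single_apply, hv]

theorem foldr_pderiv_prod_X {L : List σ} (hL : L.Nodup) (S : Finset σ) :
    L.foldr (fun v g => pderiv v g) (∏ u ∈ S, X u : MvPolynomial σ R) =
      if L.toFinset ⊆ S then ∏ u ∈ S \ L.toFinset, X u else 0 := by
  induction L with
  | nil => simp
  | cons v L ih =>
    obtain ⟨hvL, hL⟩ := List.nodup_cons.mp hL
    rw [List.foldr_cons, ih hL, List.toFinset_cons]
    by_cases hLS : L.toFinset ⊆ S
    · have hvL' : v ∉ L.toFinset := by simpa using hvL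
      rw [if_pos hLS, pderiv_prod_X, Finset.sdiff_insert]
      simp [Finset.insert_subset_iff, hLS, hvL']
    · simp [Finset.insert_subset_iff, hLS]

theorem pderivFinset_prod_X (D S : Finset σ) :
    pderivFinset D (∏ v ∈ S, X v : MvPolynomial σ R) =
      if D ⊆ S then ∏ v ∈ S \ D, X v else 0 := by
  rw [pderivFinset, foldr_pderiv_prod_X D.nodup_toList, Finset.toList_toFinset]

end pderivFinset

theorem pderivFinset_prod_X_graph {R α β : Type*} [CommSemiring R] [Fintype α] [DecidableEq α]
    [DecidableEq β] {t : ℕ} (row : Fin t → α) (col : Fin t → β) (g : α → β) :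
    pderivFinset (Finset.univ.image fun k => (row k, col k))
        (∏ i, X (i, g i) : MvPolynomial (α × β) R) =
      if ∀ k, g (row k) = col k then ∏ i ∈ Finset.univ \ Finset.univ.image row, X (i, g i)
      else 0 := by
  have hg : Function.Injective fun i => (i, g i) := fun i j h => congrArg Prod.fst h
  have hsub : (Finset.univ.image fun k => (row k, col k)) ⊆ Finset.univ.image (fun i => (i, g i))
      ↔ ∀ k, g (row k) = col k := by
    simp [Finset.subset_iff, eq_comm]
  rw [← Finset.prod_image hg.injOn, pderivFinset_prod_X, if_congr hsub rfl rfl]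
  refine if_ctx_congr Iff.rfl (fun hcol => ?_) fun _ => rfl
  have hD : (Finset.univ.image fun k => (row k, col k)) =
      (Finset.univ.image row).image fun i => (i, g i) := by
    simp [Finset.image_image, Function.comp_def, hcol]
  rw [hD, ← Finset.image_sdiff _ _ hg, Finset.prod_image hg.injOn]

theorem pderivFinset_NW {Fn K : Type*} [CommRing Fn] [Fintype Fn] [DecidableEq Fn]
    [CommSemiring K] (d : ℕ) {t : ℕ} (row col : Fin t → Fn) :
    pderivFinset (Finset.univ.image fun k => (row k, col k)) (NW Fn K d) =
      ∑ a : Fin d → Fn, if ∀ k, polyEval a (row k) = col k then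
        ∏ i ∈ Finset.univ \ Finset.univ.image row, X (i, polyEval a i) else 0 := by
  simp only [NW, pderivFinset_sum, pderivFinset_prod_X_graph]

theorem pderiv_NW_admissible_general
    (n : ℕ) (Fn : Type*) [Field Fn] [Fintype Fn] [DecidableEq Fn]
    (K : Type*) [Field K]
    (ε : ℝ)
    (t : ℕ) (hεt : ε * n ≤ (t : ℝ))
    (row col : Fin t → Fn) (hrow : Function.Injective row) :
    (∀ a b : Fin ⌈ε * n⌉₊ → Fn,
        (∀ k, polyEval a (row k) = col k) → (∀ k, polyEval b (row k) = col k) → a = b) ∧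
    (∀ a : Fin ⌈ε * n⌉₊ → Fn, (∀ k, polyEval a (row k) = col k) →
        pderivFinset (Finset.image (fun k => (row k, col k)) Finset.univ)
            (NW Fn K ⌈ε * n⌉₊)
          = ∏ i ∈ Finset.univ \ Finset.image row Finset.univ, X (i, polyEval a i)) ∧
    ((¬ ∃ a : Fin ⌈ε * n⌉₊ → Fn, ∀ k, polyEval a (row k) = col k) →
        pderivFinset (Finset.image (fun k => (row k, col k)) Finset.univ)
            (NW Fn K ⌈ε * n⌉₊) = 0) := by
  have unique (a b : Fin ⌈ε * n⌉₊ → Fn) (ha : ∀ k, polyEval a (row k) = col k)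
      (hb : ∀ k, polyEval b (row k) = col k) : a = b :=
    eq_of_polyEval_eq_of_le (Nat.ceil_le.mpr hεt) hrow fun k => (ha k).trans (hb k).symm
  refine ⟨unique, fun a ha => ?_, fun hnone => ?_⟩
  · rw [pderivFinset_NW, Finset.sum_eq_single a
      (fun b _ hba => if_neg fun hb => hba (unique b a hb ha)) (by simp), if_pos ha]
  · rw [pderivFinset_NW]
    exact Finset.sum_eq_zero fun b _ => if_neg fun hb => hnone ⟨b, hb⟩

/-- Let `ε ∈ (0,1/2)` and let `D = {x_{i_1 j_1}, …, x_{i_t j_t}}` be an admissible set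
(distinct row indices, `εn ≤ t ≤ n`). There is at most one univariate polynomial `a` of
degree `< εn` over `F_n` with `a(i_k) = j_k` for all `k`; if such `a` exists, then
`∂NW_{n,ε}/∂D = ∏_{i ∉ {i_1,…,i_t}} x_{i,a(i)}`, and otherwise `∂NW_{n,ε}/∂D = 0`. -/
theorem pderiv_NW_admissible
    (n : ℕ) (Fn : Type*) [Field Fn] [Fintype Fn] [DecidableEq Fn]
    (hcard : Fintype.card Fn = n)
    (K : Type*) [Field K]
    (ε : ℝ) (hε : ε ∈ Set.Ioo (0 : ℝ) (1 / 2))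
    (t : ℕ) (hεt : ε * n ≤ (t : ℝ)) (htn : t ≤ n)
    (row col : Fin t → Fn) (hrow : Function.Injective row) :
    (∀ a b : Fin ⌈ε * n⌉₊ → Fn,
        (∀ k, polyEval a (row k) = col k) → (∀ k, polyEval b (row k) = col k) → a = b) ∧
    (∀ a : Fin ⌈ε * n⌉₊ → Fn, (∀ k, polyEval a (row k) = col k) →
        pderivFinset (Finset.image (fun k => (row k, col k)) Finset.univ)
            (NW Fn K ⌈ε * n⌉₊)
          = ∏ i ∈ Finset.univ \ Finset.image row Finset.univ, X (i, polyEval a i)) ∧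
    ((¬ ∃ a : Fin ⌈ε * n⌉₊ → Fn, ∀ k, polyEval a (row k) = col k) →
        pderivFinset (Finset.image (fun k => (row k, col k)) Finset.univ)
            (NW Fn K ⌈ε * n⌉₊) = 0) :=
  pderiv_NW_admissible_general n Fn K ε t hεt row col hrow
end
end

section
/- Let q be a prime power and let T = L_1 L_2 ⋯ L_d be a product of polynomials of total degree at most 1 in F_q[x_1,…,x_N]. Let r be the dimension of the F_q-linear span of {L_1, …, L_d} inside the space of polynomials of total degree at most 1 (equivalently, viewing each L_i as a vector in F_q^{N+1}). Then the F_q-linear span, inside the space of all functions F_q^N → F_q, of the evaluation functions a ↦ (∂^α T)(a) taken over all partial-derivative multi-indices α (including α = 0), has dimension at most q^r. -/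
/-!
The partial derivatives of an affine form are constants, so the subalgebra generated by
`L_1, …, L_d` is closed under every `∂/∂x_i` and hence contains every `∂^α T`. This
subalgebra is generated by a basis `g_1, …, g_r` of the span of the `L_j`, so the value of
each of its elements at `a` depends only on `(g_1(a), …, g_r(a)) ∈ F_q^r`: all these
evaluation functions lie in the image of the `q^r`-dimensional space of functions
`F_q^r → F_q`.
-/

open MvPolynomial

noncomputable section

/-- Iterated partial derivative with respect to a list of variables (arbitrary
partial-derivative multi-indices `α`, including `α = 0`, correspond to such lists). -/
def pderivList {σ : Type*} {K : Type*} [CommSemiring K] (l : List σ)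
    (f : MvPolynomial σ K) : MvPolynomial σ K :=
  l.foldr (fun v g => pderiv v g) f

theorem Derivation.map_mem_adjoin {R A : Type*} [CommSemiring R] [CommSemiring A] [Algebra R A]
    (D : Derivation R A A) {s : Set A} (hs : ∀ x ∈ s, D x ∈ Algebra.adjoin R s) {a : A}
    (ha : a ∈ Algebra.adjoin R s) : D a ∈ Algebra.adjoin R s := by
  induction ha using Algebra.adjoin_induction with
  | mem x hx => exact hs x hx
  | algebraMap c => simp
  | add x y _ _ hx hy => simpa using add_mem hx hy
  | mul x y hx' hy' hx hy =>
    rw [Derivation.leibniz, smul_eq_mul, smul_eq_mul]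
    exact add_mem (mul_mem hx' hy) (mul_mem hy' hx)

theorem Submodule.le_adjoin_range_basis {R A ι : Type*} [CommSemiring R] [Semiring A]
    [Algebra R A] {W : Submodule R A} (b : Module.Basis ι R W) :
    W ≤ Subalgebra.toSubmodule (Algebra.adjoin R (Set.range fun i => (b i : A))) := by
  intro x hx
  have hspan : x ∈ Submodule.span R (Set.range fun i => (b i : A)) := by
    rw [Set.range_comp', ← W.coe_subtype, Submodule.span_image]
    exact ⟨⟨x, hx⟩, b.mem_span _, rfl⟩
  exact Algebra.span_le_adjoin R _ hspan

namespace MvPolynomial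

variable {σ K : Type*}

theorem totalDegree_pderiv_le [CommSemiring K] (i : σ) (p : MvPolynomial σ K) :
    (pderiv i p).totalDegree ≤ p.totalDegree - 1 := by
  conv_lhs => rw [← sum_homogeneousComponent p, map_sum]
  refine (totalDegree_finsetSum _ _).trans (Finset.sup_le fun k hk => ?_)
  refine (homogeneousComponent_isHomogeneous k p).pderiv.totalDegree_le.trans ?_
  have := Finset.mem_range.mp hk
  omega

theorem eval_aeval [CommSemiring K] {ι : Type*} (g : ι → MvPolynomial σ K)
    (P : MvPolynomial ι K) (a : σ → K) :
    eval a (aeval g P) = eval (fun i => eval a (g i)) P := by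
  rw [aeval_eq_bind₁]
  exact eval₂Hom_bind₁ _ _ _ _

theorem pderiv_mem_adjoin_of_totalDegree_le_one [CommSemiring K]
    {s : Set (MvPolynomial σ K)} (hs : ∀ x ∈ s, x.totalDegree ≤ 1) (i : σ)
    {p : MvPolynomial σ K} (hp : p ∈ Algebra.adjoin K s) : pderiv i p ∈ Algebra.adjoin K s := by
  refine (pderiv i).map_mem_adjoin (fun x hx => ?_) hp
  have hconst : (pderiv i x).totalDegree = 0 := by
    have := totalDegree_pderiv_le i x
    have := hs x hx
    omega
  rw [totalDegree_eq_zero_iff_eq_C.mp hconst, ← algebraMap_eq]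
  exact Subalgebra.algebraMap_mem _ _

theorem finrank_span_eval_le [Field K] [Fintype K] {ι : Type*} [Fintype ι]
    (g : ι → MvPolynomial σ K) {S : Set ((σ → K) → K)}
    (hS : ∀ f ∈ S, ∃ p ∈ Algebra.adjoin K (Set.range g), f = fun a => eval a p) :
    Module.finrank K (Submodule.span K S) ≤ Fintype.card K ^ Fintype.card ι := by
  classical
  let Φ := LinearMap.funLeft K K fun (a : σ → K) i => eval a (g i)
  have hrange : Submodule.span K S ≤ LinearMap.range Φ := by
    refine Submodule.span_le.mpr fun f hf => ?_
    obtain ⟨p, hp, rfl⟩ := hS f hf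
    rw [Algebra.adjoin_range_eq_range_aeval] at hp
    obtain ⟨P, rfl⟩ := hp
    refine ⟨fun v => eval v P, ?_⟩
    ext a
    exact (eval_aeval g P a).symm
  calc Module.finrank K (Submodule.span K S)
      ≤ Module.finrank K (LinearMap.range Φ) := Submodule.finrank_mono hrange
    _ ≤ Module.finrank K ((ι → K) → K) := LinearMap.finrank_range_le Φ
    _ = Fintype.card K ^ Fintype.card ι := by
      rw [Module.finrank_fintype_fun_eq_card, Fintype.card_fun]

end MvPolynomial

theorem pderivList_mem {σ K : Type*} [CommSemiring K] {S : Subalgebra K (MvPolynomial σ K)}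
    (hS : ∀ i, ∀ p ∈ S, pderiv i p ∈ S) (l : List σ) {p : MvPolynomial σ K} (hp : p ∈ S) :
    pderivList l p ∈ S := by
  induction l with
  | nil => exact hp
  | cons i l ih => exact hS i _ ih

/-- Let `T = L_1 ⋯ L_d` be a product of affine linear forms in `F_q[x_1,…,x_N]` and let
`r` be the dimension of the `F_q`-span of `{L_1, …, L_d}` (inside the polynomial ring,
equivalently viewing each `L_i` as a vector in `F_q^(N+1)`). Then the `F_q`-span of the
evaluation functions `a ↦ (∂^α T)(a)` over all partial-derivative multi-indices `α`
(including `α = 0`) has dimension at most `q^r`. -/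
theorem derivative_space_of_product_of_linear_forms
    (Fq : Type*) [Field Fq] [Fintype Fq] (N d : ℕ)
    (L : Fin d → MvPolynomial (Fin N) Fq)
    (hdeg : ∀ j, (L j).totalDegree ≤ 1) :
    Module.finrank Fq ↥(Submodule.span Fq
      {g : (Fin N → Fq) → Fq | ∃ l : List (Fin N),
        g = fun a => MvPolynomial.eval a (pderivList l (∏ j : Fin d, L j))})
      ≤ Fintype.card Fq ^
          (Module.finrank Fq ↥(Submodule.span Fq (Set.range L))) := by
  set W := Submodule.span Fq (Set.range L)
  have : FiniteDimensional Fq W := FiniteDimensional.span_of_finite Fq (Set.finite_range L)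
  let b := Module.finBasis Fq W
  let g : Fin (Module.finrank Fq W) → MvPolynomial (Fin N) Fq := fun i => b i
  have hL : Set.range L ⊆ Algebra.adjoin Fq (Set.range g) :=
    fun _ hx => Submodule.le_adjoin_range_basis b (Submodule.subset_span hx)
  have hT (l : List (Fin N)) : pderivList l (∏ j, L j) ∈ Algebra.adjoin Fq (Set.range L) :=
    pderivList_mem (fun i _ => pderiv_mem_adjoin_of_totalDegree_le_one
        (by rintro _ ⟨j, rfl⟩; exact hdeg j) i) l
      (Subalgebra.prod_mem _ fun j _ => Algebra.subset_adjoin ⟨j, rfl⟩)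
  refine (finrank_span_eval_le g ?_).trans_eq (by simp)
  rintro _ ⟨l, rfl⟩
  exact ⟨_, Algebra.adjoin_le hL (hT l), rfl⟩
end
end
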